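/- arXiv:2304.10651 — 4 statements merged into one kernel-verified Lean document; each statement's English description precedes it below -/
import Mathlib

section
/- There exists a 3-player game with empty medium core but nonempty weak core: for N = {A,B,C} with v({A}) = 0, v({B}) = 4, v({C}) = 0, v({A,B}) = 0, v({A,C}) = 6, v({B,C}) = 0, v({A,B,C}) = 8, the partition {{A,C},{B}} has worth 10 > 8 = v(N) (so the medium core is empty), yet the allocation x = (A↦0, B↦6, C↦2) lies in the weak core: for every partition P ≠ {N} some C ∈ P satisfies Σ_{i∈C} x(i) ≥ v(C). -/
open Finset

variable {α : Type*} [DecidableEq α]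

/-- `P` is a partition of the finite set `N`: every block is nonempty, contained in `N`,
and every player of `N` lies in exactly one block. -/
def IsPartition (N : Finset α) (P : Finset (Finset α)) : Prop :=
  (∀ C ∈ P, C.Nonempty) ∧ (∀ C ∈ P, C ⊆ N) ∧ (∀ i ∈ N, ∃! C, C ∈ P ∧ i ∈ C)

/-- `P'` refines `P`: every block of `P'` is contained in a block of `P`. -/
def Refines (P' P : Finset (Finset α)) : Prop :=
  ∀ C' ∈ P', ∃ C ∈ P, C' ⊆ C

/-- Strict refinement. -/
def StrictlyRefines (P' P : Finset (Finset α)) : Prop :=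
  Refines P' P ∧ P' ≠ P

/-- The worth of a partition: the sum of the values of its blocks. -/
def worth (v : Finset α → ℝ) (P : Finset (Finset α)) : ℝ :=
  ∑ C ∈ P, v C

lemma classify_subset (S : Finset ℕ) (h : S ⊆ {0, 1, 2}) :
    S = ∅ ∨ S = {0} ∨ S = {1} ∨ S = {2} ∨ S = {0, 1} ∨ S = {0, 2} ∨ S = {1, 2} ∨
      S = {0, 1, 2} := by
  have h' : S ∈ ({0, 1, 2} : Finset ℕ).powerset := Finset.mem_powerset.2 h
  have e : ({0, 1, 2} : Finset ℕ).powerset =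
      {∅, {0}, {1}, {2}, {0, 1}, {0, 2}, {1, 2}, {0, 1, 2}} := by decide
  rw [e] at h'
  simp only [Finset.mem_insert, Finset.mem_singleton] at h'
  tauto

/-- Example (players A=0, B=1, C=2) with empty medium core but nonempty
weak core. -/
theorem empty_medium_core_nonempty_weak_core (v : Finset ℕ → ℝ)
    (hA : v {0} = 0) (hB : v {1} = 4) (hC : v {2} = 0)
    (hAB : v {0, 1} = 0) (hAC : v {0, 2} = 6) (hBC : v {1, 2} = 0)
    (hABC : v {0, 1, 2} = 8) :
    (worth v {({0, 2} : Finset ℕ), {1}} = 10 ∧ (10 : ℝ) > v {0, 1, 2}) ∧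
    (∃ x : ℕ → ℝ, x 0 = 0 ∧ x 1 = 6 ∧ x 2 = 2 ∧
      (∑ i ∈ ({0, 1, 2} : Finset ℕ), x i = v {0, 1, 2}) ∧
      (∀ i ∈ ({0, 1, 2} : Finset ℕ), v {i} ≤ x i) ∧
      (∀ P : Finset (Finset ℕ), IsPartition {0, 1, 2} P → P ≠ {({0, 1, 2} : Finset ℕ)} →
        ∃ C ∈ P, v C ≤ ∑ i ∈ C, x i)) := by
  refine ⟨⟨?_, ?_⟩, ?_⟩
  · rw [worth, Finset.sum_pair (by decide : ({0,2} : Finset ℕ) ≠ {1}), hAC, hB]; norm_num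
  · rw [hABC]; norm_num
  · refine ⟨fun i => if i = 0 then 0 else if i = 1 then 6 else 2, rfl, rfl, rfl, ?_, ?_, ?_⟩
    · rw [hABC]
      rw [show ({0,1,2} : Finset ℕ) = insert 0 (insert 1 {2}) from rfl]
      rw [Finset.sum_insert (by decide), Finset.sum_insert (by decide), Finset.sum_singleton]
      norm_num
    · intro i hi
      fin_cases hi <;> simp [hA, hB, hC] <;> norm_num
    · intro P hP hPne
      obtain ⟨hne, hsub, huniq⟩ := hP
      obtain ⟨C1, ⟨hC1P, h1C1⟩, huniq1⟩ := huniq 1 (by decide)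
      rcases classify_subset C1 (hsub C1 hC1P) with h|h|h|h|h|h|h|h
      all_goals subst h
      · exact absurd h1C1 (by decide)
      · exact absurd h1C1 (by decide)
      · refine ⟨{1}, hC1P, ?_⟩
        rw [hB, Finset.sum_singleton]; norm_num
      · exact absurd h1C1 (by decide)
      · refine ⟨{0,1}, hC1P, ?_⟩
        rw [hAB, Finset.sum_pair (by decide : (0:ℕ) ≠ 1)]; norm_num
      · exact absurd h1C1 (by decide)
      · -- C1 = {1,2}; look at block of 0
        obtain ⟨C0, ⟨hC0P, h0C0⟩, huniq0⟩ := huniq 0 (by decide)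
        have h0ne : C0 ≠ {1, 2} := by
          intro h; rw [h] at h0C0; exact absurd h0C0 (by decide)
        rcases classify_subset C0 (hsub C0 hC0P) with h|h|h|h|h|h|h|h
        all_goals subst h
        · exact absurd h0C0 (by decide)
        · refine ⟨{0}, hC0P, ?_⟩
          rw [hA, Finset.sum_singleton]; norm_num
        · exact absurd h0C0 (by decide)
        · exact absurd h0C0 (by decide)
        · -- {0,1}: contradiction, 1 in two blocks
          have := huniq1 {0,1} ⟨hC0P, by decide⟩
          exact absurd this (by decide)
        · -- {0,2}: contradiction via block of 2
          obtain ⟨C2, ⟨hC2P, h2C2⟩, huniq2⟩ := huniq 2 (by decide)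
          have e1 := huniq2 {0,2} ⟨hC0P, by decide⟩
          have e2 := huniq2 {1,2} ⟨hC1P, by decide⟩
          exact absurd (e1.trans e2.symm) (by decide)
        · exact absurd rfl h0ne
        · have := huniq1 {0,1,2} ⟨hC0P, by decide⟩
          exact absurd this (by decide)
      · -- C1 = {0,1,2}: P = {{0,1,2}}, contradiction
        exfalso
        apply hPne
        ext D
        simp only [Finset.mem_singleton]
        constructor
        · intro hD
          obtain ⟨i, hiD⟩ := hne D hD
          have hiN := hsub D hD hiD
          obtain ⟨Ci, _, huniqi⟩ := huniq i hiN
          have e1 := huniqi D ⟨hD, hiD⟩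
          have e2 := huniqi {0,1,2} ⟨hC1P, hiN⟩
          rw [e1, e2]
        · intro hD; subst hD; exact hC1P
end

section
/- A partition P = {C_1,...,C_p} of N satisfies Σ_{C∈P} v(C) ≥ Σ_{C'∈P'} v(C') for every strict refinement P' of P if and only if, for every k, v(C_k) ≥ Σ_{D∈Q} v(D) for every partition Q of C_k with Q ≠ {C_k}. -/
open Finset

variable {α : Type*} [DecidableEq α]

lemma IsPartition.eq_of_mem {N : Finset α} {P : Finset (Finset α)} (hP : IsPartition N P)
    {C D : Finset α} (hC : C ∈ P) (hD : D ∈ P) {i : α} (hiC : i ∈ C) (hiD : i ∈ D) :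
    C = D := by
  obtain ⟨-, h2, h3⟩ := hP
  obtain ⟨E, -, hE⟩ := h3 i (h2 C hC hiC)
  rw [hE C ⟨hC, hiC⟩, hE D ⟨hD, hiD⟩]

/-- medium fission resistance decomposes over the constituent coalitions. -/
theorem medium_fission_resistance_decomposition (N : Finset α) (v : Finset α → ℝ)
    (P : Finset (Finset α)) (hP : IsPartition N P) :
    (∀ P' : Finset (Finset α), IsPartition N P' → StrictlyRefines P' P →
        worth v P' ≤ worth v P) ↔
    (∀ C ∈ P, ∀ Q : Finset (Finset α), IsPartition C Q → Q ≠ {C} →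
        worth v Q ≤ v C) := by
  constructor
  · intro h C hC Q hQ hQne
    set P' : Finset (Finset α) := (P.erase C) ∪ Q with hP'def
    have hCsub : C ⊆ N := hP.2.1 C hC
    have hdisj : ∀ D ∈ Q, D ∉ P.erase C := by
      intro D hDQ hDE
      obtain ⟨i, hi⟩ := hQ.1 D hDQ
      have hiC : i ∈ C := hQ.2.1 D hDQ hi
      exact (Finset.ne_of_mem_erase hDE)
        (hP.eq_of_mem (Finset.mem_of_mem_erase hDE) hC hi hiC)
    have hpart : IsPartition N P' := by
      refine ⟨?_, ?_, ?_⟩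
      · intro D hD
        rcases Finset.mem_union.1 hD with h1 | h2
        · exact hP.1 D (Finset.mem_of_mem_erase h1)
        · exact hQ.1 D h2
      · intro D hD
        rcases Finset.mem_union.1 hD with h1 | h2
        · exact hP.2.1 D (Finset.mem_of_mem_erase h1)
        · exact (hQ.2.1 D h2).trans hCsub
      · intro i hi
        by_cases hiC : i ∈ C
        · obtain ⟨D, ⟨hDQ, hiD⟩, hDu⟩ := hQ.2.2 i hiC
          refine ⟨D, ⟨Finset.mem_union_right _ hDQ, hiD⟩, ?_⟩
          rintro E ⟨hE, hiE⟩
          rcases Finset.mem_union.1 hE with h1 | h2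
          · exact absurd (hP.eq_of_mem (Finset.mem_of_mem_erase h1) hC hiE hiC)
              (Finset.ne_of_mem_erase h1)
          · exact hDu E ⟨h2, hiE⟩
        · obtain ⟨D, ⟨hDP, hiD⟩, hDu⟩ := hP.2.2 i hi
          have hDC : D ≠ C := fun h => hiC (h ▸ hiD)
          refine ⟨D, ⟨Finset.mem_union_left _ (Finset.mem_erase.2 ⟨hDC, hDP⟩), hiD⟩, ?_⟩
          rintro E ⟨hE, hiE⟩
          rcases Finset.mem_union.1 hE with h1 | h2
          · exact hDu E ⟨Finset.mem_of_mem_erase h1, hiE⟩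
          · exact absurd (hQ.2.1 E h2 hiE) hiC
    have hsr : StrictlyRefines P' P := by
      constructor
      · intro D hD
        rcases Finset.mem_union.1 hD with h1 | h2
        · exact ⟨D, Finset.mem_of_mem_erase h1, Finset.Subset.refl D⟩
        · exact ⟨C, hC, hQ.2.1 D h2⟩
      · intro heq
        have hCQ : C ∈ Q := by
          have hCP' : C ∈ P' := heq ▸ hC
          rcases Finset.mem_union.1 hCP' with h1 | h2
          · exact absurd rfl (Finset.ne_of_mem_erase h1)
          · exact h2
        apply hQne
        apply Finset.Subset.antisymm
        · intro D hD
          obtain ⟨i, hi⟩ := hQ.1 D hD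
          have hDC : D = C := hQ.eq_of_mem hD hCQ hi (hQ.2.1 D hD hi)
          simp [hDC]
        · simp [hCQ]
    have hle := h P' hpart hsr
    have hw : worth v P' = worth v (P.erase C) + worth v Q := by
      unfold worth
      rw [hP'def, Finset.sum_union (Finset.disjoint_left.2 fun D h1 h2 => hdisj D h2 h1)]
    have hw2 : worth v P = worth v (P.erase C) + v C := by
      unfold worth
      rw [Finset.sum_erase_add _ _ hC]
    rw [hw, hw2] at hle
    linarith
  · intro h P' hP' hsr
    have hunion : P' = P.biUnion (fun C => P'.filter (· ⊆ C)) := by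
      ext C'
      simp only [Finset.mem_biUnion, Finset.mem_filter]
      constructor
      · intro hC'
        obtain ⟨C, hCP, hsub⟩ := hsr.1 C' hC'
        exact ⟨C, hCP, hC', hsub⟩
      · rintro ⟨C, -, hC', -⟩
        exact hC'
    have hsum : worth v P' = ∑ C ∈ P, worth v (P'.filter (· ⊆ C)) := by
      unfold worth
      conv_lhs => rw [hunion]
      rw [Finset.sum_biUnion]
      intro C1 h1 C2 h2 hne
      refine Finset.disjoint_left.2 ?_
      intro C' hm1 hm2
      simp only [Finset.mem_filter] at hm1 hm2
      obtain ⟨i, hi⟩ := hP'.1 C' hm1.1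
      exact hne (hP.eq_of_mem h1 h2 (hm1.2 hi) (hm2.2 hi))
    rw [hsum]
    unfold worth
    apply Finset.sum_le_sum
    intro C hC
    have hQpart : IsPartition C (P'.filter (· ⊆ C)) := by
      refine ⟨?_, ?_, ?_⟩
      · intro D hD; exact hP'.1 D (Finset.mem_filter.1 hD).1
      · intro D hD; exact (Finset.mem_filter.1 hD).2
      · intro i hiC
        have hiN : i ∈ N := hP.2.1 C hC hiC
        obtain ⟨C', ⟨hC'P', hiC'⟩, hu⟩ := hP'.2.2 i hiN
        obtain ⟨D, hDP, hsub⟩ := hsr.1 C' hC'P'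
        have hDC : D = C := hP.eq_of_mem hDP hC (hsub hiC') hiC
        refine ⟨C', ⟨Finset.mem_filter.2 ⟨hC'P', hDC ▸ hsub⟩, hiC'⟩, ?_⟩
        rintro E ⟨hE, hiE⟩
        exact hu E ⟨(Finset.mem_filter.1 hE).1, hiE⟩
    by_cases hcase : P'.filter (· ⊆ C) = {C}
    · rw [hcase]; simp
    · exact h C hC _ hQpart hcase
end

section
/- A partition-allocation pair (P, x) is weakly fission-resistant for (N,v) if and only if for every constituent coalition C_k ∈ P, the restricted pair ({C_k}, x|_{C_k}) is weakly fission-resistant for (C_k, v|_{C_k}): i.e., for every refinement P' ≺ P there exists C' ∈ P' \ P with Σ_{i∈C'} x(i) ≥ v(C') if and only if for every k and every partition Q ≠ {C_k} of C_k there exists D ∈ Q with Σ_{i∈D} x(i) ≥ v(D). -/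
open Finset

variable {α : Type*} [DecidableEq α]

/-- weak fission resistance decomposes over the constituent coalitions. -/
theorem weak_fission_resistance_decomposition (N : Finset α) (v : Finset α → ℝ)
    (P : Finset (Finset α)) (x : α → ℝ) (hP : IsPartition N P)
    (hir : ∀ i ∈ N, v {i} ≤ x i)
    (heff : ∀ C ∈ P, ∑ i ∈ C, x i = v C) :
    (∀ P' : Finset (Finset α), IsPartition N P' → StrictlyRefines P' P →
        ∃ C' ∈ P', C' ∉ P ∧ v C' ≤ ∑ i ∈ C', x i) ↔
    (∀ C ∈ P, ∀ Q : Finset (Finset α), IsPartition C Q → Q ≠ {C} →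
        ∃ D ∈ Q, D ≠ C ∧ v D ≤ ∑ i ∈ D, x i) := by
  obtain ⟨hne, hsub, huniq⟩ := hP
  constructor
  · -- forward direction
    intro h C hC Q hQpart hQne
    obtain ⟨hQne', hQsub, hQuniq⟩ := hQpart
    have hCQ : C ∉ Q := by
      intro hCQ
      apply hQne
      ext D
      simp only [mem_singleton]
      constructor
      · intro hD
        obtain ⟨i, hi⟩ := hQne' D hD
        obtain ⟨E, _, hEuniq⟩ := hQuniq i (hQsub D hD hi)
        exact (hEuniq D ⟨hD, hi⟩).trans (hEuniq C ⟨hCQ, hQsub D hD hi⟩).symm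
      · rintro rfl; exact hCQ
    set P' : Finset (Finset α) := (P.erase C) ∪ Q with hP'def
    have hmem : ∀ D, D ∈ P' ↔ (D ∈ P ∧ D ≠ C) ∨ D ∈ Q := by
      intro D; simp [hP'def, mem_erase, mem_union, and_comm]
    have hQnotP : ∀ D ∈ Q, D ∉ P := by
      intro D hD hDP
      obtain ⟨i, hi⟩ := hQne' D hD
      have hiC : i ∈ C := hQsub D hD hi
      obtain ⟨E, _, hEuniq⟩ := huniq i (hsub C hC hiC)
      have h1 : D = E := hEuniq D ⟨hDP, hi⟩
      have h2 : C = E := hEuniq C ⟨hC, hiC⟩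
      have hCD : D = C := h1.trans h2.symm
      exact hCQ (hCD ▸ hD)
    have hP'part : IsPartition N P' := by
      refine ⟨?_, ?_, ?_⟩
      · intro D hD
        rcases (hmem D).1 hD with ⟨hDP, _⟩ | hDQ
        · exact hne D hDP
        · exact hQne' D hDQ
      · intro D hD
        rcases (hmem D).1 hD with ⟨hDP, _⟩ | hDQ
        · exact hsub D hDP
        · exact (hQsub D hDQ).trans (hsub C hC)
      · intro i hi
        obtain ⟨E, ⟨hEP, hiE⟩, hEuniq⟩ := huniq i hi
        by_cases hEC : E = C
        · subst hEC
          obtain ⟨D, ⟨hDQ, hiD⟩, hDuniq⟩ := hQuniq i hiE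
          refine ⟨D, ⟨(hmem D).2 (Or.inr hDQ), hiD⟩, ?_⟩
          intro B ⟨hBP', hiB⟩
          rcases (hmem B).1 hBP' with ⟨hBP, hBne⟩ | hBQ
          · exact absurd (hEuniq B ⟨hBP, hiB⟩) hBne
          · exact hDuniq B ⟨hBQ, hiB⟩
        · refine ⟨E, ⟨(hmem E).2 (Or.inl ⟨hEP, hEC⟩), hiE⟩, ?_⟩
          intro B ⟨hBP', hiB⟩
          rcases (hmem B).1 hBP' with ⟨hBP, _⟩ | hBQ
          · exact hEuniq B ⟨hBP, hiB⟩
          · exact absurd ((hEuniq C ⟨hC, hQsub B hBQ hiB⟩).symm) hEC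
      -- done partition
    have hCnotP' : C ∉ P' := by
      intro hCP'
      rcases (hmem C).1 hCP' with ⟨_, hne'⟩ | hCQ'
      · exact hne' rfl
      · exact hCQ hCQ'
    have hstrict : StrictlyRefines P' P := by
      constructor
      · intro D hD
        rcases (hmem D).1 hD with ⟨hDP, _⟩ | hDQ
        · exact ⟨D, hDP, subset_rfl⟩
        · exact ⟨C, hC, hQsub D hDQ⟩
      · intro heq
        exact hCnotP' (heq ▸ hC)
    obtain ⟨C', hC'P', hC'nP, hval⟩ := h P' hP'part hstrict
    rcases (hmem C').1 hC'P' with ⟨hCP, _⟩ | hC'Q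
    · exact absurd hCP hC'nP
    · exact ⟨C', hC'Q, fun hCC => hC'nP (hCC ▸ hC), hval⟩
  · -- backward direction
    intro h P' hP'part hstrict
    obtain ⟨hne', hsub', huniq'⟩ := hP'part
    obtain ⟨href, hnePP⟩ := hstrict
    have key : ∃ C ∈ P, P'.filter (· ⊆ C) ≠ {C} := by
      by_contra hcon
      push_neg at hcon
      apply hnePP
      apply Finset.Subset.antisymm
      · intro D hD
        obtain ⟨C, hCP, hDC⟩ := href D hD
        have : D ∈ P'.filter (· ⊆ C) := mem_filter.2 ⟨hD, hDC⟩
        rw [hcon C hCP] at this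
        rw [mem_singleton.1 this]; exact hCP
      · intro C hCP
        have : C ∈ P'.filter (· ⊆ C) := by rw [hcon C hCP]; exact mem_singleton_self C
        exact (mem_filter.1 this).1
    obtain ⟨C, hCP, hQne⟩ := key
    set Q : Finset (Finset α) := P'.filter (· ⊆ C) with hQdef
    have hQpart : IsPartition C Q := by
      refine ⟨?_, ?_, ?_⟩
      · intro D hD; exact hne' D (mem_filter.1 hD).1
      · intro D hD; exact (mem_filter.1 hD).2
      · intro i hiC
        have hiN : i ∈ N := hsub C hCP hiC
        obtain ⟨D, ⟨hDP', hiD⟩, hDuniq⟩ := huniq' i hiN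
        have hDC : D ⊆ C := by
          obtain ⟨C'', hC''P, hDC''⟩ := href D hDP'
          obtain ⟨E, _, hEuniq⟩ := huniq i hiN
          have h1 : C'' = E := hEuniq C'' ⟨hC''P, hDC'' hiD⟩
          have h2 : C = E := hEuniq C ⟨hCP, hiC⟩
          rw [h1.trans h2.symm] at hDC''
          exact hDC''
        refine ⟨D, ⟨mem_filter.2 ⟨hDP', hDC⟩, hiD⟩, ?_⟩
        intro B ⟨hBQ, hiB⟩
        exact hDuniq B ⟨(mem_filter.1 hBQ).1, hiB⟩
    obtain ⟨D, hDQ, hDneC, hval⟩ := h C hCP Q hQpart hQne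
    refine ⟨D, (mem_filter.1 hDQ).1, ?_, hval⟩
    intro hDP
    obtain ⟨i, hiD⟩ := hne' D (mem_filter.1 hDQ).1
    have hiC : i ∈ D := hiD
    have hiC' : i ∈ C := (mem_filter.1 hDQ).2 hiD
    obtain ⟨E, _, hEuniq⟩ := huniq i (hsub C hCP hiC')
    exact hDneC ((hEuniq D ⟨hDP, hiD⟩).trans (hEuniq C ⟨hCP, hiC'⟩).symm)
end

section
/- Fusion resistance of a pair (P,x) depends only on P: (P,x) is fusion-resistant for (N,v) if and only if Σ_{C∈P} v(C) ≥ Σ_{C'∈P'} v(C') for every strict coarsening P' of P. Here (P,x) fusion-resistant means: for every coarsening P' of P and every C' ∈ P' \ P, Σ_{C∈P, C⊊C'} v(C) ≥ v(C'). -/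
open Finset

variable {α : Type*} [DecidableEq α]

/-- If a block of `P` meets a block of `P'` and `P` refines `P'`, it is contained in it. -/
lemma block_subset_of_mem {N : Finset α} {P P' : Finset (Finset α)}
    (hP' : IsPartition N P') (href : Refines P P')
    {C C' : Finset α} (hC : C ∈ P) (hC' : C' ∈ P') {i : α} (hiC : i ∈ C) (hiC' : i ∈ C') :
    C ⊆ C' := by
  obtain ⟨D, hD, hCD⟩ := href C hC
  have hiN : i ∈ N := hP'.2.1 C' hC' hiC'
  obtain ⟨E, _, hEuniq⟩ := hP'.2.2 i hiN
  have h1 : D = E := hEuniq D ⟨hD, hCD hiC⟩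
  have h2 : C' = E := hEuniq C' ⟨hC', hiC'⟩
  rw [h1.trans h2.symm] at hCD
  exact hCD

/-- Two distinct blocks of a partition are disjoint. -/
lemma blocks_disjoint {N : Finset α} {P : Finset (Finset α)} (hP : IsPartition N P)
    {C D : Finset α} (hC : C ∈ P) (hD : D ∈ P) (hne : C ≠ D) : Disjoint C D := by
  rw [Finset.disjoint_left]
  intro i hiC hiD
  obtain ⟨E, _, hE⟩ := hP.2.2 i (hP.2.1 C hC hiC)
  exact hne ((hE C ⟨hC, hiC⟩).trans (hE D ⟨hD, hiD⟩).symm)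

/-- fusion resistance depends only on the partition: it holds iff the
worth of `P` dominates that of every strict coarsening. -/
theorem fusion_resistance_iff_worth_dominance (N : Finset α) (v : Finset α → ℝ)
    (P : Finset (Finset α)) (x : α → ℝ) (hP : IsPartition N P)
    (heff : ∀ C ∈ P, ∑ i ∈ C, x i = v C) :
    (∀ P' : Finset (Finset α), IsPartition N P' → StrictlyRefines P P' →
        ∀ C' ∈ P', C' ∉ P → v C' ≤ ∑ C ∈ P.filter (fun C => C ⊂ C'), v C) ↔
    (∀ P' : Finset (Finset α), IsPartition N P' → StrictlyRefines P P' →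
        worth v P' ≤ worth v P) := by
  constructor
  · -- forward direction
    intro h P' hP' hsr
    have href := hsr.1
    -- P decomposes fiberwise over P'
    have hbiU : P = P'.biUnion (fun C' => P.filter (fun C => C ⊆ C')) := by
      ext C
      simp only [Finset.mem_biUnion, Finset.mem_filter]
      constructor
      · intro hC
        obtain ⟨C', hC', hsub⟩ := href C hC
        exact ⟨C', hC', hC, hsub⟩
      · rintro ⟨C', _, hC, _⟩; exact hC
    have hdisj : ∀ a ∈ P', ∀ b ∈ P', a ≠ b →
        Disjoint (P.filter (fun C => C ⊆ a)) (P.filter (fun C => C ⊆ b)) := by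
      intro a ha b hb hab
      rw [Finset.disjoint_left]
      intro C hCa hCb
      rw [Finset.mem_filter] at hCa hCb
      obtain ⟨i, hi⟩ := hP.1 C hCa.1
      exact hab (((hP'.2.2 i (hP'.2.1 a ha (hCa.2 hi))).unique
        ⟨ha, hCa.2 hi⟩ ⟨hb, hCb.2 hi⟩))
    have hsum : worth v P = ∑ C' ∈ P', ∑ C ∈ P.filter (fun C => C ⊆ C'), v C := by
      conv_lhs => rw [worth, hbiU]
      rw [Finset.sum_biUnion hdisj]
    rw [hsum, worth]
    apply Finset.sum_le_sum
    intro C' hC'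
    by_cases hmem : C' ∈ P
    · -- the only block of P contained in C' is C' itself
      have : P.filter (fun C => C ⊆ C') = {C'} := by
        ext C
        simp only [Finset.mem_filter, Finset.mem_singleton]
        constructor
        · rintro ⟨hC, hsub⟩
          by_contra hne
          obtain ⟨i, hi⟩ := hP.1 C hC
          exact (Finset.disjoint_left.mp (blocks_disjoint hP hC hmem hne)) hi (hsub hi)
        · rintro rfl; exact ⟨hmem, le_refl _⟩
      rw [this, Finset.sum_singleton]
    · have : P.filter (fun C => C ⊆ C') = P.filter (fun C => C ⊂ C') := by
        apply Finset.filter_congr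
        intro C hC
        constructor
        · intro hsub
          exact Finset.ssubset_iff_subset_ne.mpr ⟨hsub, fun h => hmem (h ▸ hC)⟩
        · exact fun h => h.subset
      rw [this]
      exact h P' hP' hsr C' hC' hmem
  · -- backward direction
    intro h P' hP' hsr C' hC' hC'P
    set S := P.filter (fun C => C ⊆ C') with hS
    set P'' := insert C' (P.filter (fun C => ¬ C ⊆ C')) with hP''def
    have hC'nonempty : C'.Nonempty := hP'.1 C' hC'
    have hC'N : C' ⊆ N := hP'.2.1 C' hC'
    -- every i ∈ C' has its P-block inside C'
    have hkey : ∀ i ∈ C', ∀ C ∈ P, i ∈ C → C ⊆ C' := by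
      intro i hi C hC hiC
      exact block_subset_of_mem hP' hsr.1 hC hC' hiC hi
    have hP''part : IsPartition N P'' := by
      refine ⟨?_, ?_, ?_⟩
      · intro C hC
        rw [hP''def, Finset.mem_insert] at hC
        rcases hC with rfl | hC
        · exact hC'nonempty
        · exact hP.1 C (Finset.mem_filter.mp hC).1
      · intro C hC
        rw [hP''def, Finset.mem_insert] at hC
        rcases hC with rfl | hC
        · exact hC'N
        · exact hP.2.1 C (Finset.mem_filter.mp hC).1
      · intro i hi
        obtain ⟨C, ⟨hC, hiC⟩, hCuniq⟩ := hP.2.2 i hi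
        by_cases hsub : C ⊆ C'
        · refine ⟨C', ⟨Finset.mem_insert_self _ _, hsub hiC⟩, ?_⟩
          rintro D ⟨hD, hiD⟩
          rw [hP''def, Finset.mem_insert] at hD
          rcases hD with rfl | hD
          · rfl
          · rw [Finset.mem_filter] at hD
            exact absurd (hCuniq D ⟨hD.1, hiD⟩ ▸ hsub) hD.2
        · refine ⟨C, ⟨Finset.mem_insert_of_mem (Finset.mem_filter.mpr ⟨hC, hsub⟩), hiC⟩, ?_⟩
          rintro D ⟨hD, hiD⟩
          rw [hP''def, Finset.mem_insert] at hD
          rcases hD with rfl | hD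
          · exact absurd (hkey i hiD C hC hiC) hsub
          · exact hCuniq D ⟨(Finset.mem_filter.mp hD).1, hiD⟩
    have hsr'' : StrictlyRefines P P'' := by
      constructor
      · intro C hC
        by_cases hsub : C ⊆ C'
        · exact ⟨C', Finset.mem_insert_self _ _, hsub⟩
        · exact ⟨C, Finset.mem_insert_of_mem (Finset.mem_filter.mpr ⟨hC, hsub⟩), le_refl _⟩
      · intro heq
        exact hC'P (heq ▸ Finset.mem_insert_self C' _)
    have hdom := h P'' hP''part hsr''
    have hC'notfilter : C' ∉ P.filter (fun C => ¬ C ⊆ C') := by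
      intro hmem
      exact hC'P (Finset.mem_filter.mp hmem).1
    have hw'' : worth v P'' = v C' + ∑ C ∈ P.filter (fun C => ¬ C ⊆ C'), v C := by
      rw [hP''def, worth, Finset.sum_insert hC'notfilter]
    have hwP : worth v P = ∑ C ∈ P.filter (fun C => C ⊆ C'), v C
        + ∑ C ∈ P.filter (fun C => ¬ C ⊆ C'), v C := by
      rw [worth, Finset.sum_filter_add_sum_filter_not]
    have hle : v C' ≤ ∑ C ∈ P.filter (fun C => C ⊆ C'), v C := by
      have := hw'' ▸ hwP ▸ hdom
      linarith
    have heqf : P.filter (fun C => C ⊆ C') = P.filter (fun C => C ⊂ C') := by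
      apply Finset.filter_congr
      intro C hC
      constructor
      · intro hsub
        exact Finset.ssubset_iff_subset_ne.mpr ⟨hsub, fun h2 => hC'P (h2 ▸ hC)⟩
      · exact fun h2 => h2.subset
    rw [← heqf]
    exact hle
end
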